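/- For any dimension $d\geq 1$, shape parameters $a,b>0$ and scale $c>0$, the marginal density of $\boldsymbol{\beta}\in\mathbb{R}^d$ obtained by mixing $N_d(\mathbf{0},\tau^2 I_d)$ over $\tau^2\sim \mathrm{SBP}(a,b,c)$ is $p(\boldsymbol{\beta})=\frac{\Gamma(b+d/2)}{(2\pi c)^{d/2}B(a,b)}\,\mathcal{U}\big(b+d/2,\,-a+d/2+1,\,\|\boldsymbol{\beta}\|_2^2/(2c)\big)$, where $\mathcal{U}$ is the confluent hypergeometric function of the second kind (Kummer's U). -/

import Mathlib

open MeasureTheory Real Set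

/-- Kummer's confluent hypergeometric function of the second kind, via its
integral representation (valid for `α > 0`, `z > 0`). -/
noncomputable def kummerU (α γ z : ℝ) : ℝ :=
  (1 / Real.Gamma α) *
    ∫ t in Ioi (0:ℝ), Real.exp (-z * t) * t ^ (α - 1) * (1 + t) ^ (γ - α - 1)

noncomputable def betaFn (a b : ℝ) : ℝ :=
  Real.Gamma a * Real.Gamma b / Real.Gamma (a + b)

/-!
Substituting `τ² = c / t` turns the mixing integral into the integral representation of Kummer's
`U`: the Gaussian factor `exp (-‖β‖² / (2τ²))` becomes `exp (-(‖β‖² / (2c)) t)`, and the powers of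
`t` coming from the Gaussian normalisation, the scaled beta prime density and the Jacobian `c / t²`
collect to `t ^ (b + d/2 - 1) (1 + t) ^ (-(a + b))`.
-/

theorem integral_comp_div_Ioi {E : Type*} [NormedAddCommGroup E] [NormedSpace ℝ E]
    (g : ℝ → E) {c : ℝ} (hc : 0 < c) :
    ∫ t in Ioi (0 : ℝ), (c / t ^ 2) • g (c / t) = ∫ x in Ioi (0 : ℝ), g x := by
  have hscale : ∫ x in Ioi (0 : ℝ), g x = c • ∫ y in Ioi (0 : ℝ), g (c * y) := by
    rw [integral_comp_mul_left_Ioi' g 0 hc, mul_zero]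
  rw [hscale, ← integral_comp_rpow_Ioi (fun y => g (c * y)) (by norm_num : (-1 : ℝ) ≠ 0),
    ← integral_smul]
  refine setIntegral_congr_fun measurableSet_Ioi fun t ht => ?_
  have ht : 0 < t := ht
  rw [smul_smul, rpow_neg_one, show (-1 : ℝ) - 1 = -(2 : ℕ) by norm_num, rpow_neg ht.le,
    rpow_natCast]
  simp only [abs_neg, abs_one, one_mul, div_eq_mul_inv]

theorem gaussianScaleMixture_integrand_comp_div (a b c r s : ℝ) {t : ℝ} (hc : 0 < c)
    (ht : 0 < t) :
    c / t ^ 2 * ((2 * π * (c / t)) ^ (-r) * exp (-s / (2 * (c / t))) *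
        (1 / (c * betaFn a b) * (c / t / c) ^ (a - 1) * (1 + c / t / c) ^ (-(a + b)))) =
      (2 * π * c) ^ (-r) / betaFn a b *
        (exp (-(s / (2 * c)) * t) * t ^ (b + r - 1) * (1 + t) ^ (-(a + b))) := by
  have hvariance : (2 * π * (c / t)) ^ (-r) = (2 * π * c) ^ (-r) * t ^ r := by
    rw [← mul_div_assoc, div_rpow (by positivity) ht.le, rpow_neg ht.le, div_inv_eq_mul]
  have hexp : -s / (2 * (c / t)) = -(s / (2 * c)) * t := by field_simp
  have hratio : c / t / c = t⁻¹ := by field_simp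
  have hshift : 1 + t⁻¹ = (1 + t) / t := by field_simp; ring
  have hpow : t ^ (b + r - 1) = t ^ r * t⁻¹ ^ (a - 1) * t ^ (a + b) / t ^ 2 := by
    rw [inv_rpow ht.le, ← rpow_neg ht.le, ← rpow_natCast, ← rpow_add ht, ← rpow_add ht,
      ← rpow_sub ht]
    ring_nf
  rw [hvariance, hexp, hratio, hshift, div_rpow (by positivity) ht.le, rpow_neg ht.le (a + b),
    div_inv_eq_mul, hpow]
  field_simp

theorem marginal_spike_slab_general
    (d : ℕ) (a b c : ℝ) (hb : 0 < b) (hc : 0 < c)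
    (β : EuclideanSpace ℝ (Fin d)) :
    (∫ τ2 in Ioi (0:ℝ),
        (2 * π * τ2) ^ (-(d : ℝ) / 2) * Real.exp (-‖β‖ ^ 2 / (2 * τ2)) *
          (1 / (c * betaFn a b) * (τ2 / c) ^ (a - 1) * (1 + τ2 / c) ^ (-(a + b)))) =
      Real.Gamma (b + d / 2) / ((2 * π * c) ^ ((d : ℝ) / 2) * betaFn a b) *
        kummerU (b + d / 2) (-a + d / 2 + 1) (‖β‖ ^ 2 / (2 * c)) := by
  have hΓ : Gamma (b + d / 2) ≠ 0 := (Gamma_pos_of_pos (by positivity)).ne'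
  have hexponent : -a + d / 2 + 1 - (b + d / 2) - 1 = -(a + b) := by ring
  rw [← integral_comp_div_Ioi _ hc, neg_div (2 : ℝ) (d : ℝ)]
  simp_rw [smul_eq_mul]
  rw [setIntegral_congr_fun measurableSet_Ioi fun t ht =>
      gaussianScaleMixture_integrand_comp_div a b c _ _ hc ht,
    integral_const_mul, kummerU, hexponent, rpow_neg (by positivity)]
  field_simp

/-- Mixing `N_d(0, τ² I_d)` over `τ² ~ SBP(a,b,c)` yields the
group horseshoe-like marginal density
`Γ(b+d/2) / ((2πc)^{d/2} B(a,b)) · U(b+d/2, -a+d/2+1, ‖β‖²/(2c))`. -/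
theorem marginal_spike_slab
    (d : ℕ) (hd : 1 ≤ d) (a b c : ℝ) (ha : 0 < a) (hb : 0 < b) (hc : 0 < c)
    (β : EuclideanSpace ℝ (Fin d)) :
    (∫ τ2 in Ioi (0:ℝ),
        (2 * π * τ2) ^ (-(d : ℝ) / 2) * Real.exp (-‖β‖ ^ 2 / (2 * τ2)) *
          (1 / (c * betaFn a b) * (τ2 / c) ^ (a - 1) * (1 + τ2 / c) ^ (-(a + b)))) =
      Real.Gamma (b + d / 2) / ((2 * π * c) ^ ((d : ℝ) / 2) * betaFn a b) *
        kummerU (b + d / 2) (-a + d / 2 + 1) (‖β‖ ^ 2 / (2 * c)) :=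
  marginal_spike_slab_general d a b c hb hc β
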